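/- arXiv:2109.04495 — 6 statements merged into one kernel-verified Lean document; each statement's English description precedes it below -/
import Mathlib

section
/- For integers n ≥ 3, the function i ↦ 1/(sin(πi/n)·csc(π(i+1)/n) + 1) is strictly decreasing on real i ∈ [0, n/2 - 1]; in particular, for integers 0 ≤ i < j ≤ ⌊n/2⌋ - 1, the slope v_i/h_i of the diagonal ν_i exceeds v_j/h_j. -/
/-! The identity `sin y sin (x + 1) - sin x sin (y + 1) = sin 1 sin (y - x)` (all angles scaled by
`θ = π / n`) shows that `t ↦ sin (θ t) / sin (θ (t + 1))` is strictly increasing as long as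
`θ (t + 1) < π`, so `1 / (sin (θ t) / sin (θ (t + 1)) + 1)` is strictly decreasing. With
`φ = π / (2n)`, `sin (2φ) = 2 sin φ cos φ` and `sin (2φt) + sin (2φ(t + 1)) = 2 sin (φ(2t + 1)) cos φ`
turn the slope `v_t / h_t` into exactly this function. -/

open Real Set

theorem sin_mul_sin_add_one_sub_sin_mul_sin_add_one (θ x y : ℝ) :
    sin (θ * y) * sin (θ * (x + 1)) - sin (θ * x) * sin (θ * (y + 1)) =
      sin θ * sin (θ * (y - x)) := by
  simp only [mul_add, mul_sub, mul_one, sin_add, sin_sub]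
  ring

theorem strictMonoOn_sin_mul_div_sin_mul_add_one {θ : ℝ} (hθ : 0 < θ) :
    StrictMonoOn (fun t => sin (θ * t) / sin (θ * (t + 1))) (Ico 0 (π / θ - 1)) := by
  intro x ⟨hx0, hx⟩ y ⟨_, hy⟩ hxy
  have hπ : ∀ {t}, t < π / θ - 1 → θ * (t + 1) < π := fun ht => by
    rw [lt_sub_iff_add_lt, lt_div_iff₀ hθ] at ht; linarith
  have hsx : 0 < sin (θ * (x + 1)) := sin_pos_of_pos_of_lt_pi (by positivity) (hπ hx)
  have hsy : 0 < sin (θ * (y + 1)) :=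
    sin_pos_of_pos_of_lt_pi (by nlinarith) (hπ hy)
  have hdiff : 0 < sin θ * sin (θ * (y - x)) :=
    mul_pos (sin_pos_of_pos_of_lt_pi hθ (by nlinarith [hπ hx]))
      (sin_pos_of_pos_of_lt_pi (by nlinarith) (by nlinarith [hπ hy]))
  rw [div_lt_div_iff₀ hsx hsy]
  linarith [sin_mul_sin_add_one_sub_sin_mul_sin_add_one θ x y]

theorem sin_mul_div_sin_mul_add_one_nonneg {θ t : ℝ} (hθ : 0 < θ)
    (ht : t ∈ Ico 0 (π / θ - 1)) : 0 ≤ sin (θ * t) / sin (θ * (t + 1)) := by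
  obtain ⟨ht0, ht⟩ := ht
  rw [lt_sub_iff_add_lt, lt_div_iff₀ hθ] at ht
  exact div_nonneg (sin_nonneg_of_nonneg_of_le_pi (by positivity) (by nlinarith))
    (sin_nonneg_of_nonneg_of_le_pi (by positivity) (by linarith))

theorem StrictMonoOn.one_div_add_one {α : Type*} [Preorder α] {f : α → ℝ} {s : Set α}
    (hf : StrictMonoOn f s) (h0 : ∀ t ∈ s, 0 ≤ f t) :
    StrictAntiOn (fun t => 1 / (f t + 1)) s := fun x hx y hy hxy =>
  one_div_lt_one_div_of_lt (by linarith [h0 x hx]) (by linarith [hf hx hy hxy])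

theorem inv_sin_mul_sin_div_inv_sin_mul_sin (φ t : ℝ) (hφ : sin φ ≠ 0)
    (ht : sin (2 * φ * (t + 1)) ≠ 0) :
    (sin (2 * φ))⁻¹ * sin (2 * φ * (t + 1)) / ((sin φ)⁻¹ * sin (φ * (1 + 2 * t))) =
      1 / (sin (2 * φ * t) * (sin (2 * φ * (t + 1)))⁻¹ + 1) := by
  have hsum : sin (2 * φ * t) + sin (2 * φ * (t + 1)) = 2 * sin (φ * (1 + 2 * t)) * cos φ := by
    rw [sin_add_sin, ← cos_neg]
    ring_nf
  rw [sin_two_mul, ← div_eq_mul_inv, div_add_one ht, one_div_div, hsum]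
  field_simp

theorem diagonal_slope_eq {n t : ℝ} (hn : 0 < n) (ht0 : 0 ≤ t) (ht : t ≤ n / 2 - 1) :
    (sin (π / n))⁻¹ * sin (π * (t + 1) / n) /
        ((sin (π / (2 * n)))⁻¹ * sin (π * (1 + 2 * t) / (2 * n))) =
      1 / (sin (π * t / n) * (sin (π * (t + 1) / n))⁻¹ + 1) := by
  have hφ : π / n = 2 * (π / (2 * n)) := by field_simp
  have hφt : ∀ s, π * s / n = 2 * (π / (2 * n)) * s := fun s => by field_simp
  rw [hφ, hφt, hφt, mul_div_right_comm π (1 + 2 * t)]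
  apply inv_sin_mul_sin_div_inv_sin_mul_sin
  · exact (sin_pos_of_pos_of_lt_pi (by positivity)
      (div_lt_self pi_pos (by linarith))).ne'
  · rw [← hφ]
    refine (sin_pos_of_pos_of_lt_pi (by positivity) ?_).ne'
    rw [div_mul_eq_mul_div, div_lt_iff₀ hn]
    nlinarith [pi_pos]

theorem stmt7 (n : ℕ) (hn : 3 ≤ n) :
    StrictAntiOn
      (fun i : ℝ => 1 / (Real.sin (π * i / n) * (Real.sin (π * (i + 1) / n))⁻¹ + 1))
      (Set.Icc 0 ((n : ℝ) / 2 - 1)) ∧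
    ∀ i j : ℕ, i < j → j ≤ n / 2 - 1 →
      ((Real.sin (π / n))⁻¹ * Real.sin (π * ((i : ℝ) + 1) / n)) /
          ((Real.sin (π / (2 * n)))⁻¹ * Real.sin (π * (1 + 2 * (i : ℝ)) / (2 * n))) >
        ((Real.sin (π / n))⁻¹ * Real.sin (π * ((j : ℝ) + 1) / n)) /
          ((Real.sin (π / (2 * n)))⁻¹ * Real.sin (π * (1 + 2 * (j : ℝ)) / (2 * n))) := by
  have hn0 : (0 : ℝ) < n := by positivity
  have hanti : StrictAntiOn
      (fun i : ℝ => 1 / (sin (π * i / n) * (sin (π * (i + 1) / n))⁻¹ + 1))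
      (Icc 0 ((n : ℝ) / 2 - 1)) := by
    have hθ : 0 < π / n := by positivity
    simp only [mul_div_right_comm π, ← div_eq_mul_inv]
    refine ((strictMonoOn_sin_mul_div_sin_mul_add_one hθ).one_div_add_one
      fun t ht => sin_mul_div_sin_mul_add_one_nonneg hθ ht).mono ?_
    rw [div_div_cancel₀ pi_pos.ne']
    exact Icc_subset_Ico_right (by linarith)
  refine ⟨hanti, fun i j hij hj => ?_⟩
  have hj' : (j : ℝ) ≤ n / 2 - 1 := by
    rw [le_sub_iff_add_le, le_div_iff₀ two_pos]
    exact_mod_cast (by omega : (j + 1) * 2 ≤ n)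
  have hi' : (i : ℝ) ≤ n / 2 - 1 := le_trans (by exact_mod_cast hij.le) hj'
  rw [gt_iff_lt, diagonal_slope_eq hn0 i.cast_nonneg hi', diagonal_slope_eq hn0 j.cast_nonneg hj']
  exact hanti ⟨i.cast_nonneg, hi'⟩ ⟨j.cast_nonneg, hj'⟩ (by exact_mod_cast hij)
end

section
/- For integers n ≥ 3, the function i ↦ 1/(sin(π(i+1)/n)·csc(πi/n) + 1) is strictly increasing on real i ∈ [1, n/2 - 1]; in particular, for integers 1 ≤ i < j ≤ ⌈n/2⌉ - 1, the slope v_{i-1}/h_i of the diagonal σ_i is less than v_{j-1}/h_j. -/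
/-!
Writing `d = π / n` and `a = π i / n`, the first function is `1 / (sin (a + d) / sin a + 1)` and
the slope `v_{i-1} / h_i` is a positive constant divided by `sin (a + d') / sin a` with
`d' = π / (2 n)`. Both claims therefore follow from the fact that `a ↦ sin (a + d) / sin a` is
strictly decreasing on `(0, π - d)`, which by the product-to-sum formula comes down to `cos`
being decreasing on `[0, π]`.
-/

open Real Set

lemma sin_add_mul_sin_lt_sin_add_mul_sin {a b d : ℝ} (ha : 0 < a) (hab : a < b) (hd : 0 < d)
    (hbd : b + d ≤ π) : sin (b + d) * sin a < sin (a + d) * sin b := by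
  have habs : |a + d - b| < b + d - a := abs_lt.mpr ⟨by linarith, by linarith⟩
  have hcos : cos (b + d - a) < cos (a + d - b) := by
    rw [← cos_abs (a + d - b)]
    exact strictAntiOn_cos ⟨abs_nonneg _, by linarith⟩ ⟨by linarith, by linarith⟩ habs
  have h₁ := two_mul_sin_mul_sin (b + d) a
  have h₂ := two_mul_sin_mul_sin (a + d) b
  rw [show b + d + a = a + d + b by ring] at h₁
  linarith

lemma sin_add_div_sin_pos {a d : ℝ} (hd : 0 < d) (ha : a ∈ Ioo 0 (π - d)) :
    0 < sin (a + d) / sin a :=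
  div_pos (sin_pos_of_pos_of_lt_pi (by linarith [ha.1]) (by linarith [ha.2]))
    (sin_pos_of_pos_of_lt_pi ha.1 (by linarith [ha.2]))

lemma strictAntiOn_sin_add_div_sin {d : ℝ} (hd : 0 < d) :
    StrictAntiOn (fun a => sin (a + d) / sin a) (Ioo 0 (π - d)) := by
  intro a ha b hb hab
  rw [div_lt_div_iff₀ (sin_pos_of_pos_of_lt_pi (by linarith [ha.1]) (by linarith [hb.2]))
    (sin_pos_of_pos_of_lt_pi ha.1 (by linarith [ha.2]))]
  exact sin_add_mul_sin_lt_sin_add_mul_sin ha.1 hab hd (by linarith [hb.2])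

lemma strictMonoOn_one_div_sin_ratio_add_one {n : ℝ} :
    StrictMonoOn (fun x : ℝ => 1 / (sin (π * (x + 1) / n) * (sin (π * x / n))⁻¹ + 1))
      (Icc 1 (n / 2 - 1)) := by
  intro x hx y hy hxy
  have hn : 4 ≤ n := by linarith [hx.1, hx.2]
  have hd : 0 < π / n := by positivity
  have hmem : ∀ z ∈ Icc 1 (n / 2 - 1), π * z / n ∈ Ioo 0 (π - π / n) := fun z hz =>
    ⟨by have := hz.1; positivity, by
      rw [← sub_pos, show π - π / n - π * z / n = π * ((n - 1 - z) / n) by field_simp]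
      have : 0 < n - 1 - z := by linarith [hz.2]
      positivity⟩
  have hshift : ∀ z : ℝ, π * (z + 1) / n = π * z / n + π / n := fun z => by ring
  simp only [hshift, ← div_eq_mul_inv]
  have hlt := strictAntiOn_sin_add_div_sin hd (hmem x hx) (hmem y hy) (by gcongr)
  exact one_div_lt_one_div_of_lt (by linarith [sin_add_div_sin_pos hd (hmem y hy)])
    (by linarith)

lemma strictMonoOn_sin_ratio_div_sin_ratio {n : ℝ} :
    StrictMonoOn (fun k : ℝ => ((sin (π / n))⁻¹ * sin (π * k / n)) /
        ((sin (π / (2 * n)))⁻¹ * sin (π * (1 + 2 * k) / (2 * n))))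
      (Icc 1 ((n - 1) / 2)) := by
  intro x hx y hy hxy
  have hn : 3 ≤ n := by linarith [hx.1, hx.2]
  have hd : 0 < π / (2 * n) := by positivity
  have hmem : ∀ k ∈ Icc 1 ((n - 1) / 2), π * k / n ∈ Ioo 0 (π - π / (2 * n)) := fun k hk =>
    ⟨by have := hk.1; positivity, by
      rw [← sub_pos, show π - π / (2 * n) - π * k / n = π * ((2 * n - 1 - 2 * k) / (2 * n)) by
        field_simp]
      have : 0 < 2 * n - 1 - 2 * k := by linarith [hk.2]
      positivity⟩
  have hc : 0 < sin (π / (2 * n)) / sin (π / n) := by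
    apply div_pos <;> apply sin_pos_of_pos_of_lt_pi (by positivity) <;>
      rw [div_lt_iff₀ (by positivity)] <;> nlinarith [pi_pos]
  have hslope : ∀ k : ℝ, ((sin (π / n))⁻¹ * sin (π * k / n)) /
        ((sin (π / (2 * n)))⁻¹ * sin (π * (1 + 2 * k) / (2 * n))) =
      sin (π / (2 * n)) / sin (π / n) / (sin (π * k / n + π / (2 * n)) / sin (π * k / n)) :=
    fun k => by
      rw [show π * (1 + 2 * k) / (2 * n) = π * k / n + π / (2 * n) by field_simp; ring]
      simp only [div_eq_mul_inv, mul_inv, inv_inv]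
      ring
  simp only [hslope]
  exact div_lt_div_of_pos_left hc (sin_add_div_sin_pos hd (hmem y hy))
    (strictAntiOn_sin_add_div_sin hd (hmem x hx) (hmem y hy) (by gcongr))

theorem stmt8_general (n : ℕ) :
    StrictMonoOn
      (fun i : ℝ => 1 / (Real.sin (π * (i + 1) / n) * (Real.sin (π * i / n))⁻¹ + 1))
      (Set.Icc 1 ((n : ℝ) / 2 - 1)) ∧
    ∀ i j : ℕ, 1 ≤ i → i < j → j ≤ (n + 1) / 2 - 1 →
      ((Real.sin (π / n))⁻¹ * Real.sin (π * (i : ℝ) / n)) /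
          ((Real.sin (π / (2 * n)))⁻¹ * Real.sin (π * (1 + 2 * (i : ℝ)) / (2 * n))) <
        ((Real.sin (π / n))⁻¹ * Real.sin (π * (j : ℝ) / n)) /
          ((Real.sin (π / (2 * n)))⁻¹ * Real.sin (π * (1 + 2 * (j : ℝ)) / (2 * n))) := by
  refine ⟨strictMonoOn_one_div_sin_ratio_add_one, fun i j hi hij hj => ?_⟩
  have hjn : 2 * (j : ℝ) + 1 ≤ n := by exact_mod_cast (by omega : 2 * j + 1 ≤ n)
  have hmem : ∀ k : ℕ, 1 ≤ k → k ≤ j → (k : ℝ) ∈ Icc 1 (((n : ℝ) - 1) / 2) := fun k hk hkj =>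
    ⟨by exact_mod_cast hk, by linarith [(Nat.cast_le (α := ℝ)).mpr hkj]⟩
  exact strictMonoOn_sin_ratio_div_sin_ratio (hmem i hi hij.le) (hmem j (hi.trans hij.le) le_rfl)
    (by exact_mod_cast hij)

theorem stmt8 (n : ℕ) (hn : 3 ≤ n) :
    StrictMonoOn
      (fun i : ℝ => 1 / (Real.sin (π * (i + 1) / n) * (Real.sin (π * i / n))⁻¹ + 1))
      (Set.Icc 1 ((n : ℝ) / 2 - 1)) ∧
    ∀ i j : ℕ, 1 ≤ i → i < j → j ≤ (n + 1) / 2 - 1 →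
      ((Real.sin (π / n))⁻¹ * Real.sin (π * (i : ℝ) / n)) /
          ((Real.sin (π / (2 * n)))⁻¹ * Real.sin (π * (1 + 2 * (i : ℝ)) / (2 * n))) <
        ((Real.sin (π / n))⁻¹ * Real.sin (π * (j : ℝ) / n)) /
          ((Real.sin (π / (2 * n)))⁻¹ * Real.sin (π * (1 + 2 * (j : ℝ)) / (2 * n))) :=
  stmt8_general n
end

section
/- For integers n ≥ 3 and 0 ≤ i ≤ ⌊n/2⌋ - 2, with h_j = csc(π/(2n))·sin(π(1+2j)/(2n)) and v_j = csc(π/n)·sin(π(j+1)/n), one has (h_{i+1} - 1)/v_{i+1} - (h_i - 1)/v_i = (1 + v_{i+1} - v_i)/(v_i·v_{i+1}) > 0. -/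
/-!
With `t = π / (2n)` one has `h_j = sin ((2j+1)t) / sin t` and `v_j = sin ((2j+2)t) / sin (2t)`.
Putting the difference over the common denominator `v_i v_{i+1}`, the claimed identity amounts to
`h_{i+1} v_i - h_i v_{i+1} = 1`, which is the product-to-sum identity
`sin (x+2t) sin (x+t) - sin x sin (x+3t) = sin t sin (2t)` at `x = (2i+1)t`.
Positivity follows since `v_{i+1} - v_i = 2 sin t cos ((2i+3)t) / sin (2t) ≥ 0` as long as
`(2i+3)t ≤ π/2`, i.e. `2i+3 ≤ n`.
-/

open Real

theorem sin_add_two_mul_mul_sin_add_sub_sin_mul_sin_add_three_mul (x t : ℝ) :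
    sin (x + 2 * t) * sin (x + t) - sin x * sin (x + 3 * t) = sin t * sin (2 * t) := by
  have e₁ := two_mul_sin_mul_sin (x + 2 * t) (x + t)
  have e₂ := two_mul_sin_mul_sin x (x + 3 * t)
  have e₃ := two_mul_sin_mul_sin (2 * t) t
  rw [show x + 2 * t - (x + t) = t by ring, show x + 2 * t + (x + t) = 2 * x + 3 * t by ring] at e₁
  rw [show x - (x + 3 * t) = -(3 * t) by ring, show x + (x + 3 * t) = 2 * x + 3 * t by ring,
    cos_neg] at e₂
  rw [show 2 * t - t = t by ring, show 2 * t + t = 3 * t by ring] at e₃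
  linear_combination (e₁ - e₂ - e₃) / 2

theorem sub_one_div_sub_sub_one_div_eq {h h' v v' : ℝ} (hv : v ≠ 0) (hv' : v' ≠ 0)
    (hcross : h' * v - h * v' = 1) :
    (h' - 1) / v' - (h - 1) / v = (1 + v' - v) / (v * v') := by
  field_simp
  linear_combination hcross

namespace Staircase

noncomputable def hSide (t j : ℝ) : ℝ := sin ((2 * j + 1) * t) / sin t

noncomputable def vSide (t j : ℝ) : ℝ := sin ((2 * j + 2) * t) / sin (2 * t)

theorem hSide_add_one_mul_vSide_sub {t : ℝ} (ht : sin t ≠ 0) (ht₂ : sin (2 * t) ≠ 0) (j : ℝ) :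
    hSide t (j + 1) * vSide t j - hSide t j * vSide t (j + 1) = 1 := by
  have key := sin_add_two_mul_mul_sin_add_sub_sin_mul_sin_add_three_mul ((2 * j + 1) * t) t
  rw [show (2 * j + 1) * t + 2 * t = (2 * (j + 1) + 1) * t by ring,
    show (2 * j + 1) * t + t = (2 * j + 2) * t by ring,
    show (2 * j + 1) * t + 3 * t = (2 * (j + 1) + 2) * t by ring] at key
  simp only [hSide, vSide]
  rw [div_mul_div_comm, div_mul_div_comm, ← sub_div, key, div_self (mul_ne_zero ht ht₂)]

theorem vSide_pos {t j : ℝ} (ht : 0 < t) (hj : 0 ≤ j) (hjt : (2 * j + 2) * t < π) :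
    0 < vSide t j := by
  have ht₂ : 2 * t < π := by nlinarith
  exact div_pos (sin_pos_of_pos_of_lt_pi (by positivity) hjt)
    (sin_pos_of_pos_of_lt_pi (by positivity) ht₂)

theorem vSide_le_vSide_add_one {t j : ℝ} (ht : 0 < t) (hj : 0 ≤ j) (hjt : (2 * j + 3) * t ≤ π / 2) :
    vSide t j ≤ vSide t (j + 1) := by
  have hsin : 0 < sin t := sin_pos_of_pos_of_lt_pi ht (by nlinarith [pi_pos])
  have hsin₂ : 0 < sin (2 * t) := sin_pos_of_pos_of_lt_pi (by positivity) (by nlinarith [pi_pos])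
  have hcos : 0 ≤ cos ((2 * j + 3) * t) :=
    cos_nonneg_of_neg_pi_div_two_le_of_le (by nlinarith [pi_pos]) hjt
  have hdiff := sin_sub_sin ((2 * (j + 1) + 2) * t) ((2 * j + 2) * t)
  rw [show ((2 * (j + 1) + 2) * t - (2 * j + 2) * t) / 2 = t by ring,
    show ((2 * (j + 1) + 2) * t + (2 * j + 2) * t) / 2 = (2 * j + 3) * t by ring] at hdiff
  unfold vSide
  gcongr
  nlinarith [mul_nonneg hsin.le hcos]

end Staircase

open Staircase in
theorem stmt9 (n i : ℕ) (hn : 3 ≤ n) (hi : i ≤ n / 2 - 2) :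
    letI h : ℕ → ℝ := fun j => (Real.sin (π / (2 * n)))⁻¹ * Real.sin (π * (1 + 2 * (j : ℝ)) / (2 * n))
    letI v : ℕ → ℝ := fun j => (Real.sin (π / n))⁻¹ * Real.sin (π * ((j : ℝ) + 1) / n)
    (h (i + 1) - 1) / v (i + 1) - (h i - 1) / v i = (1 + v (i + 1) - v i) / (v i * v (i + 1)) ∧
      (1 + v (i + 1) - v i) / (v i * v (i + 1)) > 0 := by
  have hn₀ : (0 : ℝ) < n := by positivity
  have hh : ∀ j : ℕ, (sin (π / (2 * n)))⁻¹ * sin (π * (1 + 2 * (j : ℝ)) / (2 * n)) =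
      hSide (π / (2 * n)) j := fun j => by
    rw [hSide, inv_mul_eq_div]
    congr 2
    field_simp
    ring
  have hv : ∀ j : ℕ, (sin (π / n))⁻¹ * sin (π * ((j : ℝ) + 1) / n) = vSide (π / (2 * n)) j :=
    fun j => by
      rw [vSide, inv_mul_eq_div]
      congr 2 <;> field_simp
  beta_reduce
  simp only [hh, hv]
  set t := π / (2 * n) with ht_def
  have ht : 0 < t := by positivity
  have hit : (2 * (i : ℝ) + 3) * t ≤ π / 2 := by
    have : (2 * i + 3 : ℝ) ≤ n := by exact_mod_cast (by omega : 2 * i + 3 ≤ n)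
    calc (2 * (i : ℝ) + 3) * t ≤ n * t := by gcongr
      _ = π / 2 := by rw [ht_def]; field_simp
  have ht₃ : 3 * t ≤ π / 2 := le_trans (by gcongr; simp) hit
  have hvi := vSide_pos ht i.cast_nonneg (by linarith [pi_pos])
  have hmono := vSide_le_vSide_add_one ht i.cast_nonneg hit
  have hvi' := hvi.trans_le hmono
  push_cast
  refine ⟨sub_one_div_sub_sub_one_div_eq hvi.ne' hvi'.ne' ?_, ?_⟩
  · exact hSide_add_one_mul_vSide_sub (sin_pos_of_pos_of_lt_pi ht (by linarith [pi_pos])).ne'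
      (sin_pos_of_pos_of_lt_pi (by positivity) (by linarith [pi_pos])).ne' i
  · exact div_pos (by linarith) (mul_pos hvi hvi')
end

section
/- For integers n ≥ 3 and 1 ≤ i ≤ ⌈n/2⌉ - 2, with h_j = csc(π/(2n))·sin(π(1+2j)/(2n)) and v_j = csc(π/n)·sin(π(j+1)/n), one has (h_i - 1)/v_{i-1} - (h_{i+1} - 1)/v_i = (1 + v_{i-1} - v_i)/(v_{i-1}·v_i) > 0. -/
/-!
Put `θ = π / (2n)` and `x = 2iθ`, so that `h_i = sin (x + θ) / sin θ`, `h_{i+1} = sin (x + 3θ) / sin θ`,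
`v_{i-1} = sin x / sin 2θ` and `v_i = sin (x + 2θ) / sin 2θ`. The identity
`sin (x + a) sin (x + b) - sin (x + a + b) sin x = sin a sin b` gives `h_i v_i - h_{i+1} v_{i-1} = 1`,
which turns the difference of quotients into `(1 + v_{i-1} - v_i) / (v_{i-1} v_i)`. All four angles lie
in `(0, π)`, so both `v`'s are positive, and `sin (x + 2θ) - sin x < sin 2θ` gives a positive numerator.
-/

open Real

theorem sub_one_div_sub_sub_one_div_eq_s10 {K : Type*} [Field K] {h₀ h₁ v₀ v₁ : K} (hv₀ : v₀ ≠ 0)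
    (hv₁ : v₁ ≠ 0) (hcross : h₀ * v₁ - h₁ * v₀ = 1) :
    (h₀ - 1) / v₀ - (h₁ - 1) / v₁ = (1 + v₀ - v₁) / (v₀ * v₁) := by
  field_simp
  linear_combination hcross

theorem Real.sin_add_mul_sin_add_sub_sin_add_add_mul_sin (x a b : ℝ) :
    sin (x + a) * sin (x + b) - sin (x + a + b) * sin x = sin a * sin b := by
  simp only [sin_add, cos_add]
  linear_combination (sin a * sin b) * sin_sq_add_cos_sq x

theorem Real.inv_sin_mul_sin_cross_eq_one (x : ℝ) {θ : ℝ} (hθ : sin θ ≠ 0)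
    (h2θ : sin (2 * θ) ≠ 0) :
    (sin θ)⁻¹ * sin (x + θ) * ((sin (2 * θ))⁻¹ * sin (x + 2 * θ)) -
      (sin θ)⁻¹ * sin (x + θ + 2 * θ) * ((sin (2 * θ))⁻¹ * sin x) = 1 := calc
  _ = (sin (x + θ) * sin (x + 2 * θ) - sin (x + θ + 2 * θ) * sin x) / (sin θ * sin (2 * θ)) := by
    ring
  _ = 1 := by rw [sin_add_mul_sin_add_sub_sin_add_add_mul_sin, div_self (mul_ne_zero hθ h2θ)]

theorem Real.sin_add_sub_sin_lt {x b : ℝ} (hx : 0 < sin x) (hb₀ : 0 < b) (hbπ : b < π) :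
    sin (x + b) - sin x < sin b := by
  have hsin_b : 0 < sin b := sin_pos_of_pos_of_lt_pi hb₀ hbπ
  have hcos_b : cos b < 1 := by
    simpa using cos_lt_cos_of_nonneg_of_le_pi le_rfl hbπ.le hb₀
  rw [sin_add]
  nlinarith [cos_le_one x]

theorem stmt10_general (n i : ℕ) (hi1 : 1 ≤ i) (hi2 : i ≤ (n + 1) / 2 - 2) :
    letI h : ℕ → ℝ := fun j => (Real.sin (π / (2 * n)))⁻¹ * Real.sin (π * (1 + 2 * (j : ℝ)) / (2 * n))
    letI v : ℕ → ℝ := fun j => (Real.sin (π / n))⁻¹ * Real.sin (π * ((j : ℝ) + 1) / n)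
    (h i - 1) / v (i - 1) - (h (i + 1) - 1) / v i = (1 + v (i - 1) - v i) / (v (i - 1) * v i) ∧
      (1 + v (i - 1) - v i) / (v (i - 1) * v i) > 0 := by
  beta_reduce
  have hn : (0 : ℝ) < n := by exact_mod_cast (by omega : 0 < n)
  have hin : (i : ℝ) + 1 < n := by exact_mod_cast (by omega : i + 1 < n)
  push_cast [Nat.cast_sub hi1, sub_add_cancel]
  obtain ⟨θ, hθ_def⟩ : ∃ θ, θ = π / (2 * n) := ⟨_, rfl⟩
  obtain ⟨x, hx_def⟩ : ∃ x, x = 2 * i * θ := ⟨_, rfl⟩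
  rw [← hθ_def, show π * (1 + 2 * (i : ℝ)) / (2 * n) = x + θ by rw [hx_def, hθ_def]; ring,
    show π * (1 + 2 * ((i : ℝ) + 1)) / (2 * n) = x + θ + 2 * θ by rw [hx_def, hθ_def]; ring,
    show π * (i : ℝ) / n = x by rw [hx_def, hθ_def]; field_simp,
    show π * ((i : ℝ) + 1) / n = x + 2 * θ by rw [hx_def, hθ_def]; field_simp,
    show π / n = 2 * θ by rw [hθ_def]; field_simp]
  have hθ : 0 < θ := by rw [hθ_def]; positivity
  have hx : 0 < x := by rw [hx_def]; positivity
  have hxθ : x + 2 * θ < π := calc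
    x + 2 * θ = π * ((i + 1) / n) := by rw [hx_def, hθ_def]; field_simp
    _ < π * 1 := mul_lt_mul_of_pos_left ((div_lt_one hn).2 hin) pi_pos
    _ = π := mul_one π
  have hsin : ∀ y, 0 < y → y ≤ x + 2 * θ → 0 < sin y := fun y hy₀ hy ↦
    sin_pos_of_pos_of_lt_pi hy₀ (hy.trans_lt hxθ)
  have hsθ := hsin θ hθ (by linarith)
  have hs2θ := hsin (2 * θ) (by positivity) (by linarith)
  have hsx := hsin x hx (by linarith)
  have hsx2θ := hsin (x + 2 * θ) (by positivity) le_rfl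
  have hstep : (sin (2 * θ))⁻¹ * sin (x + 2 * θ) - (sin (2 * θ))⁻¹ * sin x < 1 := by
    rw [← mul_sub, inv_mul_lt_one₀ hs2θ]
    exact sin_add_sub_sin_lt hsx (by positivity) (by linarith)
  exact ⟨sub_one_div_sub_sub_one_div_eq_s10 (by positivity) (by positivity)
    (inv_sin_mul_sin_cross_eq_one x hsθ.ne' hs2θ.ne'),
    div_pos (by linarith) (by positivity)⟩

theorem stmt10 (n i : ℕ) (hn : 3 ≤ n) (hi1 : 1 ≤ i) (hi2 : i ≤ (n + 1) / 2 - 2) :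
    letI h : ℕ → ℝ := fun j => (Real.sin (π / (2 * n)))⁻¹ * Real.sin (π * (1 + 2 * (j : ℝ)) / (2 * n))
    letI v : ℕ → ℝ := fun j => (Real.sin (π / n))⁻¹ * Real.sin (π * ((j : ℝ) + 1) / n)
    (h i - 1) / v (i - 1) - (h (i + 1) - 1) / v i = (1 + v (i - 1) - v i) / (v (i - 1) * v i) ∧
      (1 + v (i - 1) - v i) / (v (i - 1) * v i) > 0 :=
  stmt10_general n i hi1 hi2
end

section
/- For integers n ≥ 3 and 0 ≤ i, with v_j = csc(π/n)·sin(π(j+1)/n), the function i ↦ v_{i+1}/(v_i - 1) is strictly decreasing in i on the range where v_i > 1 (i.e. 1 ≤ i ≤ n/2 - 1); its derivative with respect to i equals -π·sin(π/n)·(1 + cos((2+i)π/n)) / (n·(sin((1+i)π/n) - sin(π/n))²), which is negative. -/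
/-! With `θ = π / n` the quotient is `sin (θ (x + 2)) / (sin (θ (x + 1)) - sin θ)`. In the quotient
rule the numerator `θ (cos a (sin b - sin θ) - sin a cos b)`, with `a = θ (x + 2)`, `b = θ (x + 1)`,
collapses through `sin (a - b) = sin θ` to `-θ sin θ (1 + cos a)`, which is negative because
`0 < a < π`; strict monotonicity then follows from the mean value theorem. -/

open Real

lemma strictAntiOn_of_hasDerivAt_neg {D : Set ℝ} (hD : Convex ℝ D) {f f' : ℝ → ℝ}
    (hf : ∀ x ∈ D, HasDerivAt f (f' x) x ∧ f' x < 0) : StrictAntiOn f D :=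
  strictAntiOn_of_hasDerivWithinAt_neg hD
    (fun x hx => (hf x hx).1.continuousAt.continuousWithinAt)
    (fun x hx => (hf x (interior_subset hx)).1.hasDerivWithinAt)
    (fun x hx => (hf x (interior_subset hx)).2)

lemma inv_mul_div_inv_mul_sub_one {K : Type*} [Field K] {s : K} (hs : s ≠ 0) (a b : K) :
    s⁻¹ * a / (s⁻¹ * b - 1) = a / (b - s) := by
  rw [show s⁻¹ * b - 1 = s⁻¹ * (b - s) by field_simp, mul_div_mul_left _ _ (inv_ne_zero hs)]

lemma one_add_cos_pos {x : ℝ} (h0 : 0 ≤ x) (hπ : x < π) : 0 < 1 + cos x := by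
  have := strictAntiOn_cos ⟨h0, hπ.le⟩ ⟨pi_pos.le, le_rfl⟩ hπ
  rw [cos_pi] at this
  linarith

lemma hasDerivAt_sin_div_sin_sub (θ x : ℝ) (h : sin (θ * (x + 1)) ≠ sin θ) :
    HasDerivAt (fun x => sin (θ * (x + 2)) / (sin (θ * (x + 1)) - sin θ))
      (-(θ * sin θ * (1 + cos (θ * (x + 2)))) / (sin (θ * (x + 1)) - sin θ) ^ 2) x := by
  have hlin (c : ℝ) : HasDerivAt (fun x => θ * (x + c)) θ x := by
    simpa using ((hasDerivAt_id x).add_const c).const_mul θ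
  have hq := ((hlin 2).sin).div (((hlin 1).sin).sub_const (sin θ)) (sub_ne_zero.mpr h)
  refine hq.congr_deriv ?_
  have hsub : sin (θ * (x + 2)) * cos (θ * (x + 1)) - cos (θ * (x + 2)) * sin (θ * (x + 1))
      = sin θ := by
    rw [← sin_sub]; ring_nf
  rw [← hsub]
  ring

lemma sin_lt_sin_mul_add_one {θ x : ℝ} (hθ : 0 < θ) (hx : 0 < x) (h₁ : θ * (x + 1) ≤ π / 2) :
    sin θ < sin (θ * (x + 1)) :=
  strictMonoOn_sin ⟨by nlinarith [pi_pos], by nlinarith⟩ ⟨by nlinarith [pi_pos], h₁⟩ (by nlinarith)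

lemma neg_mul_sin_mul_one_add_cos_div_lt_zero {θ x : ℝ} (hθ : 0 < θ) (hx : 0 < x)
    (h₁ : θ * (x + 1) ≤ π / 2) (h₂ : θ * (x + 2) < π) :
    -(θ * sin θ * (1 + cos (θ * (x + 2)))) / (sin (θ * (x + 1)) - sin θ) ^ 2 < 0 := by
  have hsθ : 0 < sin θ := sin_pos_of_pos_of_lt_pi hθ (by nlinarith)
  have hden : 0 < sin (θ * (x + 1)) - sin θ := sub_pos.mpr (sin_lt_sin_mul_add_one hθ hx h₁)
  have hcos := one_add_cos_pos (by positivity) h₂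
  exact div_neg_of_neg_of_pos (neg_neg_of_pos (by positivity)) (by positivity)

theorem stmt13 (n : ℕ) (hn : 3 ≤ n) :
    letI v : ℝ → ℝ := fun i => (Real.sin (π / n))⁻¹ * Real.sin (π * (i + 1) / n)
    letI f : ℝ → ℝ := fun i => v (i + 1) / (v i - 1)
    StrictAntiOn f (Set.Icc 1 ((n : ℝ) / 2 - 1)) ∧
    ∀ i ∈ Set.Icc (1 : ℝ) ((n : ℝ) / 2 - 1),
      HasDerivAt f
        (-(π * Real.sin (π / n) * (1 + Real.cos ((2 + i) * π / n))) /
          (n * (Real.sin ((1 + i) * π / n) - Real.sin (π / n)) ^ 2)) i ∧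
      -(π * Real.sin (π / n) * (1 + Real.cos ((2 + i) * π / n))) /
          (n * (Real.sin ((1 + i) * π / n) - Real.sin (π / n)) ^ 2) < 0 := by
  beta_reduce
  set θ := π / n with hθ_def
  have hn' : (3 : ℝ) ≤ n := by exact_mod_cast hn
  have hθ : 0 < θ := by positivity
  have hπ : π = θ * n := by rw [hθ_def]; field_simp
  have hsθ : sin θ ≠ 0 := (sin_pos_of_pos_of_lt_pi hθ (by nlinarith)).ne'
  have hf : (fun x : ℝ => (sin θ)⁻¹ * sin (π * (x + 1 + 1) / n) /
      ((sin θ)⁻¹ * sin (π * (x + 1) / n) - 1)) =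
      fun x => sin (θ * (x + 2)) / (sin (θ * (x + 1)) - sin θ) := by
    funext x
    rw [inv_mul_div_inv_mul_sub_one hsθ, hθ_def]
    ring_nf
  have key (i : ℝ) (hi : i ∈ Set.Icc (1 : ℝ) ((n : ℝ) / 2 - 1)) :
      HasDerivAt (fun x => sin (θ * (x + 2)) / (sin (θ * (x + 1)) - sin θ))
        (-(π * sin θ * (1 + cos ((2 + i) * π / n))) /
          (n * (sin ((1 + i) * π / n) - sin θ) ^ 2)) i ∧
      -(π * sin θ * (1 + cos ((2 + i) * π / n))) /
          (n * (sin ((1 + i) * π / n) - sin θ) ^ 2) < 0 := by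
    have hi₀ : 0 < i := by linarith [hi.1]
    have h₁ : θ * (i + 1) ≤ π / 2 := by nlinarith [mul_le_mul_of_nonneg_left hi.2 hθ.le]
    have h₂ : θ * (i + 2) < π := by nlinarith
    have hderiv : -(π * sin θ * (1 + cos ((2 + i) * π / n))) /
        (n * (sin ((1 + i) * π / n) - sin θ) ^ 2) =
        -(θ * sin θ * (1 + cos (θ * (i + 2)))) / (sin (θ * (i + 1)) - sin θ) ^ 2 := by
      rw [hπ]; field_simp; ring_nf
    rw [hderiv]
    exact ⟨hasDerivAt_sin_div_sin_sub θ i (sin_lt_sin_mul_add_one hθ hi₀ h₁).ne',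
      neg_mul_sin_mul_one_add_cos_div_lt_zero hθ hi₀ h₁ h₂⟩
  rw [hf]
  exact ⟨strictAntiOn_of_hasDerivAt_neg (convex_Icc _ _) key, key⟩
end

section
/- For integers n ≥ 3 and 2 ≤ i, defining h_j = csc(π/(2n))·sin(π(1+2j)/(2n)) and v_j = csc(π/n)·sin(π(j+1)/n), the simultaneity of boundary crossings holds: 4·(h_1 - h_{i-2}/v_{i-2}) = 4·v_{i-1}²·(h_{i-1}/v_{i-1} - h_{i-2}/v_{i-2}) = 4·sin(iπ/n)·csc(π(i-1)/n), valid whenever 3 ≤ i ≤ n-2 so that v_{i-2} > 0 and v_{i-1} > 0. -/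
/-!
Put `s = π / (2n)` and `b = π (i - 1) / n`. Since `h₁ = sin 3s / sin s = 1 + 2 cos 2s` and
`h_j / v_j = 2 cos s · sin ((2j + 1) s) / sin (2 (j + 1) s)`, both expressions reduce to
`sin (b + 2s) / sin b`: the first through the product-to-sum identity
`(1 + 2 cos 2s) sin b - 2 cos s sin (b - s) = sin (b + 2s)`, the second through
`sin (b + s) sin b - sin (b - s) sin (b + 2s) = sin 2s sin s`.
-/

open Real

theorem sin_three_mul_eq_mul_one_add_two_cos (s : ℝ) :
    sin (3 * s) = sin s * (1 + 2 * cos (2 * s)) := by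
  rw [sin_three_mul, cos_two_mul]
  linear_combination (-4 * sin s) * sin_sq_add_cos_sq s

theorem one_add_two_cos_mul_sin_sub_two_cos_mul_sin_sub (s b : ℝ) :
    (1 + 2 * cos (2 * s)) * sin b - 2 * cos s * sin (b - s) = sin (b + 2 * s) := by
  have h₁ : 2 * sin (b - s) * cos s = sin (b - 2 * s) + sin b := by
    rw [two_mul_sin_mul_cos]; ring_nf
  have h₂ : 2 * sin b * cos (2 * s) = sin (b - 2 * s) + sin (b + 2 * s) :=
    two_mul_sin_mul_cos _ _
  linear_combination h₂ - h₁

theorem sin_add_mul_sin_sub_sin_sub_mul_sin_add_two_mul (s b : ℝ) :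
    sin (b + s) * sin b - sin (b - s) * sin (b + 2 * s) = sin (2 * s) * sin s := by
  have h₁ := two_mul_sin_mul_sin (b + s) b
  have h₂ := two_mul_sin_mul_sin (b - s) (b + 2 * s)
  have h₃ := two_mul_sin_mul_sin (2 * s) s
  ring_nf at h₁ h₂ h₃ ⊢
  rw [cos_neg] at h₂
  linear_combination (h₁ - h₂ - h₃) / 2

theorem sin_pi_mul_div_pos {k n : ℝ} (hk : 0 < k) (hkn : k < n) : 0 < sin (π * k / n) := by
  have hn : 0 < n := hk.trans hkn
  apply sin_pos_of_pos_of_lt_pi (by positivity)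
  rw [div_lt_iff₀ hn]
  nlinarith [pi_pos]

-- For `s = π / (2n)` these are the paper's `h_j` and `v_j`.
noncomputable def hCoord (s j : ℝ) : ℝ := sin ((1 + 2 * j) * s) / sin s

noncomputable def vCoord (s j : ℝ) : ℝ := sin (2 * (j + 1) * s) / sin (2 * s)

section
variable {s : ℝ}

theorem hCoord_one (hs : sin s ≠ 0) : hCoord s 1 = 1 + 2 * cos (2 * s) := by
  rw [hCoord, show (1 + 2 * 1) * s = 3 * s by ring, sin_three_mul_eq_mul_one_add_two_cos,
    mul_div_cancel_left₀ _ hs]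

theorem hCoord_div_vCoord (hs : sin s ≠ 0) (j : ℝ) :
    hCoord s j / vCoord s j = 2 * cos s * sin ((1 + 2 * j) * s) / sin (2 * (j + 1) * s) := by
  rw [hCoord, vCoord, sin_two_mul]
  field_simp

theorem hCoord_one_sub_hCoord_div_vCoord (hs : sin s ≠ 0) {j : ℝ}
    (hj : sin (2 * (j + 1) * s) ≠ 0) :
    hCoord s 1 - hCoord s j / vCoord s j = sin (2 * (j + 2) * s) / sin (2 * (j + 1) * s) := by
  rw [hCoord_one hs, hCoord_div_vCoord hs, show (1 + 2 * j) * s = 2 * (j + 1) * s - s by ring,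
    show 2 * (j + 2) * s = 2 * (j + 1) * s + 2 * s by ring] at *
  generalize 2 * (j + 1) * s = b at *
  rw [← one_add_two_cos_mul_sin_sub_two_cos_mul_sin_sub]
  field_simp

theorem vCoord_sq_mul_sub_hCoord_div_vCoord (hs : sin s ≠ 0) (hs₂ : sin (2 * s) ≠ 0) {j : ℝ}
    (hj : sin (2 * (j + 1) * s) ≠ 0) (hj₁ : sin (2 * (j + 2) * s) ≠ 0) :
    vCoord s (j + 1) ^ 2 * (hCoord s (j + 1) / vCoord s (j + 1) - hCoord s j / vCoord s j) =
      sin (2 * (j + 2) * s) / sin (2 * (j + 1) * s) := by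
  rw [hCoord_div_vCoord hs, hCoord_div_vCoord hs, vCoord,
    show (1 + 2 * (j + 1)) * s = 2 * (j + 1) * s + s by ring,
    show (1 + 2 * j) * s = 2 * (j + 1) * s - s by ring,
    show 2 * (j + 1 + 1) * s = 2 * (j + 1) * s + 2 * s by ring,
    show 2 * (j + 2) * s = 2 * (j + 1) * s + 2 * s by ring] at *
  generalize 2 * (j + 1) * s = b at *
  have key := sin_add_mul_sin_sub_sin_sub_mul_sin_add_two_mul s b
  have hc : cos s ≠ 0 := right_ne_zero_of_mul (sin_two_mul s ▸ hs₂)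
  rw [sin_two_mul] at key ⊢
  field_simp
  linear_combination key
end

theorem stmt18_general (n i : ℕ) (hi1 : 3 ≤ i) (hi2 : i ≤ n - 2) :
    letI h : ℝ → ℝ := fun j => (Real.sin (π / (2 * n)))⁻¹ * Real.sin (π * (1 + 2 * j) / (2 * n))
    letI v : ℝ → ℝ := fun j => (Real.sin (π / n))⁻¹ * Real.sin (π * (j + 1) / n)
    4 * (h 1 - h ((i : ℝ) - 2) / v ((i : ℝ) - 2)) =
        4 * (v ((i : ℝ) - 1)) ^ 2 *
          (h ((i : ℝ) - 1) / v ((i : ℝ) - 1) - h ((i : ℝ) - 2) / v ((i : ℝ) - 2)) ∧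
      4 * (h 1 - h ((i : ℝ) - 2) / v ((i : ℝ) - 2)) =
        4 * Real.sin ((i : ℝ) * π / n) * (Real.sin (π * ((i : ℝ) - 1) / n))⁻¹ := by
  have hh : (fun j : ℝ => (sin (π / (2 * n)))⁻¹ * sin (π * (1 + 2 * j) / (2 * n))) =
      hCoord (π / (2 * n)) := funext fun j => by
    rw [hCoord, inv_mul_eq_div]; congr 1; ring_nf
  have hv : (fun j : ℝ => (sin (π / n))⁻¹ * sin (π * (j + 1) / n)) = vCoord (π / (2 * n)) :=
    funext fun j => by rw [vCoord, inv_mul_eq_div]; congr 1 <;> ring_nf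
  have hi : (3 : ℝ) ≤ i := by exact_mod_cast hi1
  have hin : (i : ℝ) < n := by exact_mod_cast (show i < n by omega)
  have hn₀ : (0 : ℝ) < n := by linarith
  have a₀ : 2 * (π / (2 * n)) = π / n := by field_simp
  have a₁ : 2 * ((i : ℝ) - 2 + 1) * (π / (2 * n)) = π * ((i : ℝ) - 1) / n := by field_simp; ring
  have a₂ : 2 * ((i : ℝ) - 2 + 2) * (π / (2 * n)) = π * i / n := by field_simp; ring
  have hs : sin (π / (2 * n)) ≠ 0 := by
    simpa using (sin_pi_mul_div_pos (n := 2 * n) one_pos (by linarith)).ne'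
  have hs₂ : sin (2 * (π / (2 * n))) ≠ 0 := by
    simpa [a₀] using (sin_pi_mul_div_pos (n := n) one_pos (by linarith)).ne'
  have hj : sin (2 * ((i : ℝ) - 2 + 1) * (π / (2 * n))) ≠ 0 := by
    rw [a₁]; exact (sin_pi_mul_div_pos (by linarith) (by linarith)).ne'
  have hj₁ : sin (2 * ((i : ℝ) - 2 + 2) * (π / (2 * n))) ≠ 0 := by
    rw [a₂]; exact (sin_pi_mul_div_pos (by linarith) hin).ne'
  rw [hh, hv, show (i : ℝ) - 1 = (i : ℝ) - 2 + 1 by ring, hCoord_one_sub_hCoord_div_vCoord hs hj,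
    mul_assoc (4 : ℝ), vCoord_sq_mul_sub_hCoord_div_vCoord hs hs₂ hj hj₁, a₁, a₂]
  refine ⟨rfl, by ring_nf⟩

theorem stmt18 (n i : ℕ) (hn : 3 ≤ n) (hi1 : 3 ≤ i) (hi2 : i ≤ n - 2) :
    letI h : ℝ → ℝ := fun j => (Real.sin (π / (2 * n)))⁻¹ * Real.sin (π * (1 + 2 * j) / (2 * n))
    letI v : ℝ → ℝ := fun j => (Real.sin (π / n))⁻¹ * Real.sin (π * (j + 1) / n)
    4 * (h 1 - h ((i : ℝ) - 2) / v ((i : ℝ) - 2)) =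
        4 * (v ((i : ℝ) - 1)) ^ 2 *
          (h ((i : ℝ) - 1) / v ((i : ℝ) - 1) - h ((i : ℝ) - 2) / v ((i : ℝ) - 2)) ∧
      4 * (h 1 - h ((i : ℝ) - 2) / v ((i : ℝ) - 2)) =
        4 * Real.sin ((i : ℝ) * π / n) * (Real.sin (π * ((i : ℝ) - 1) / n))⁻¹ :=
  stmt18_general n i hi1 hi2
end
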